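/- Let K be a finite normal subgroup of a group G. Then G is acylindrically hyperbolic if and only if the quotient G/K is acylindrically hyperbolic. -/

import Mathlib

section MetricDefs

/-- A geodesic parametrization from `x` to `y`: an isometric embedding of
`[0, dist x y]` sending the endpoints to `x` and `y`. -/
def IsGeodesicParam {S : Type*} [MetricSpace S] (γ : ℝ → S) (x y : S) : Prop :=
  γ 0 = x ∧ γ (dist x y) = y ∧
    ∀ s ∈ Set.Icc (0 : ℝ) (dist x y), ∀ t ∈ Set.Icc (0 : ℝ) (dist x y),
      dist (γ s) (γ t) = |s - t|

/-- A geodesic metric space: every two points are joined by a geodesic. -/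
def GeodesicSpace (S : Type*) [MetricSpace S] : Prop :=
  ∀ x y : S, ∃ γ : ℝ → S, IsGeodesicParam γ x y

/-- The image of a geodesic side. -/
def geodSide {S : Type*} [MetricSpace S] (γ : ℝ → S) (x y : S) : Set S :=
  γ '' Set.Icc (0 : ℝ) (dist x y)

/-- `A` is contained in the union of the `δ`-neighborhoods of `B` and `C`. -/
def SideThin {S : Type*} [MetricSpace S] (δ : ℝ) (A B C : Set S) : Prop :=
  ∀ p ∈ A, ∃ q ∈ B ∪ C, dist p q ≤ δ

/-- A hyperbolic space: a geodesic metric space in which, for some `δ ≥ 0`,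
every side of every geodesic triangle is contained in the union of the
`δ`-neighborhoods of the other two sides. -/
def HyperbolicSpace (S : Type*) [MetricSpace S] : Prop :=
  GeodesicSpace S ∧
    ∃ δ : ℝ, 0 ≤ δ ∧
      ∀ (x y z : S) (γ₁ γ₂ γ₃ : ℝ → S),
        IsGeodesicParam γ₁ x y → IsGeodesicParam γ₂ y z → IsGeodesicParam γ₃ x z →
          SideThin δ (geodSide γ₁ x y) (geodSide γ₂ y z) (geodSide γ₃ x z) ∧
          SideThin δ (geodSide γ₂ y z) (geodSide γ₁ x y) (geodSide γ₃ x z) ∧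
          SideThin δ (geodSide γ₃ x z) (geodSide γ₁ x y) (geodSide γ₂ y z)

variable (G : Type*) [Group G] (S : Type*) [MetricSpace S] [MulAction G S]

/-- The action of `G` on `S` is by isometries. -/
def IsIsometricAction : Prop := ∀ (g : G) (x y : S), dist (g • x) (g • y) = dist x y

/-- The action of `G` on `S` is acylindrical: for every `ε > 0` there are `R, N > 0`
such that for all `x y` with `dist x y ≥ R` there are at most `N` elements `g` moving
both `x` and `y` by at most `ε`. -/
def AcylindricalAction : Prop :=
  ∀ ε : ℝ, 0 < ε → ∃ (R : ℝ) (N : ℕ), 0 < R ∧ 0 < N ∧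
    ∀ x y : S, R ≤ dist x y →
      {g : G | dist x (g • x) ≤ ε ∧ dist y (g • y) ≤ ε}.encard ≤ (N : ℕ∞)

/-- Some `G`-orbit in `S` is unbounded. -/
def UnboundedOrbits : Prop :=
  ∃ s : S, ¬ Bornology.IsBounded (Set.range fun g : G => g • s)

variable {G}

/-- `g` is loxodromic: orbit maps of `⟨g⟩` are quasi-isometric embeddings of `ℤ`. -/
def IsLoxodromic (g : G) : Prop :=
  ∀ s : S, ∃ c : ℝ, 0 < c ∧ ∀ n : ℤ, c * |(n : ℝ)| ≤ dist s (g ^ n • s)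

/-- `g` is elliptic: all orbits of `⟨g⟩` are bounded. -/
def IsElliptic (g : G) : Prop :=
  ∀ s : S, Bornology.IsBounded (Set.range fun n : ℤ => g ^ n • s)

/-- `g` satisfies the weak proper discontinuity (WPD) condition. -/
def IsWPD (g : G) : Prop :=
  ∀ ε : ℝ, 0 < ε → ∀ s : S, ∃ M : ℕ,
    {a : G | dist s (a • s) < ε ∧ dist (g ^ M • s) (a • g ^ M • s) < ε}.Finite

end MetricDefs

/-- A group is virtually cyclic if it contains a cyclic subgroup of finite index. -/
def VirtuallyCyclic (G : Type*) [Group G] : Prop :=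
  ∃ H : Subgroup G, IsCyclic H ∧ H.FiniteIndex

/-- A group is acylindrically hyperbolic if it is not virtually cyclic and admits an
acylindrical isometric action with unbounded orbits on a hyperbolic geodesic metric space. -/
def AcylindricallyHyperbolic (G : Type*) [Group G] : Prop :=
  ¬ VirtuallyCyclic G ∧
    ∃ (S : Type) (_ : MetricSpace S) (_ : MulAction G S),
      IsIsometricAction G S ∧ HyperbolicSpace S ∧ AcylindricalAction G S ∧ UnboundedOrbits G S

/-!
Pulling an action of `G ⧸ K` back to `G` keeps it acylindrical, since coarse stabilizers grow by
a factor at most `|K|`. Conversely, if `G` acts on a hyperbolic space `S`, then `G ⧸ K` acts on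
the space of `K`-orbits with the distance `d(K a, K b) = min_{k ∈ K} d(a, k b)`. Geodesics project
to geodesics, and hyperbolicity survives through Gromov's four-point condition: seen from a
basepoint `c`, the projection changes distances by at most the diameter of the finite orbit
`K c`, so the four-point condition at `c` passes to the quotient, and the four-point condition at
one basepoint implies it at every basepoint. Acylindricity and unbounded orbits pass to the
quotient as well, and being virtually cyclic is insensitive to finite kernels.
-/

open scoped Pointwise in
theorem Subgroup.FiniteIndex.of_sup_of_finite {G : Type*} [Group G] {H N : Subgroup G} [N.Normal]
    [Finite N] (h : (N ⊔ H).FiniteIndex) : H.FiniteIndex := by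
  have hsurj : Function.Surjective fun n : N =>
      (QuotientGroup.mk ⟨n, Subgroup.mem_sup_left n.2⟩ : ↥(N ⊔ H) ⧸ H.subgroupOf (N ⊔ H)) := by
    rintro ⟨x⟩
    obtain ⟨n, hn, y, hy, hxy⟩ : (x : G) ∈ (N : Set G) * (H : Set G) := by
      rw [← Subgroup.normal_mul]; exact x.2
    refine ⟨⟨n, hn⟩, (QuotientGroup.eq (s := H.subgroupOf (N ⊔ H))).2 ?_⟩
    simpa [Subgroup.mem_subgroupOf, ← hxy] using hy
  have : Finite (↥(N ⊔ H) ⧸ H.subgroupOf (N ⊔ H)) := Finite.of_surjective _ hsurj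
  have : (H.subgroupOf (N ⊔ H)).FiniteIndex := Subgroup.finiteIndex_of_finite_quotient
  exact ⟨by
    rw [← Subgroup.relIndex_mul_index le_sup_right]
    exact mul_ne_zero this.index_ne_zero h.index_ne_zero⟩

theorem VirtuallyCyclic.of_surjective {G H : Type*} [Group G] [Group H] {f : G →* H}
    (hf : Function.Surjective f) (h : VirtuallyCyclic G) : VirtuallyCyclic H := by
  obtain ⟨C, hC, hfin⟩ := h
  exact ⟨C.map f, isCyclic_of_surjective _ (f.subgroupMap_surjective C),
    ⟨ne_zero_of_dvd_ne_zero hfin.index_ne_zero (Subgroup.index_map_dvd C hf)⟩⟩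

theorem VirtuallyCyclic.of_quotient {G : Type*} [Group G] {K : Subgroup G} [K.Normal] [Finite K]
    (h : VirtuallyCyclic (G ⧸ K)) : VirtuallyCyclic G := by
  obtain ⟨C, hC, hfin⟩ := h
  obtain ⟨c, rfl⟩ := (Subgroup.isCyclic_iff_exists_zpowers_eq_top C).1 hC
  obtain ⟨g, rfl⟩ := QuotientGroup.mk'_surjective K c
  have hcomap : (Subgroup.zpowers (QuotientGroup.mk' K g)).comap (QuotientGroup.mk' K) =
      K ⊔ Subgroup.zpowers g := by
    rw [← MonoidHom.map_zpowers, Subgroup.comap_map_eq, QuotientGroup.ker_mk', sup_comm]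
  refine ⟨Subgroup.zpowers g, inferInstance, Subgroup.FiniteIndex.of_sup_of_finite (N := K) ⟨?_⟩⟩
  rw [← hcomap, Subgroup.index_comap_of_surjective _ (QuotientGroup.mk'_surjective K)]
  exact hfin.index_ne_zero

theorem Set.encard_iUnion_le_card_mul {ι α : Type*} [Finite ι] (s : ι → Set α) {N : ℕ∞}
    (h : ∀ i, (s i).encard ≤ N) : (⋃ i, s i).encard ≤ Nat.card ι * N := by
  have := Fintype.ofFinite ι
  calc (⋃ i, s i).encard ≤ ∑ i, (s i).encard := Set.encard_iUnion_le_of_fintype s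
    _ ≤ ∑ _i : ι, N := Finset.sum_le_sum fun i _ => h i
    _ = Nat.card ι * N := by simp [Nat.card_eq_fintype_card]

theorem QuotientGroup.encard_preimage_mk_le {G : Type*} [Group G] (K : Subgroup G) [K.Normal]
    [Finite K] (s : Set (G ⧸ K)) :
    ((QuotientGroup.mk : G → G ⧸ K) ⁻¹' s).encard ≤ Nat.card K * s.encard := by
  have hcover : (QuotientGroup.mk : G → G ⧸ K) ⁻¹' s ⊆ ⋃ k : K, (fun q => q.out * k) '' s := by
    intro g hg
    refine Set.mem_iUnion.2 ⟨⟨(g : G ⧸ K).out⁻¹ * g, QuotientGroup.eq.1 (QuotientGroup.out_eq' _)⟩,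
      g, hg, by simp⟩
  exact (Set.encard_le_encard hcover).trans
    (Set.encard_iUnion_le_card_mul _ fun _ => Set.encard_image_le _ _)

theorem Set.encard_le_of_inv_mul_mem {G : Type*} [Group G] {V U : Set G}
    (h : ∀ v ∈ V, ∀ w ∈ V, v⁻¹ * w ∈ U) : V.encard ≤ U.encard := by
  rcases V.eq_empty_or_nonempty with rfl | ⟨v, hv⟩
  · simp
  calc V.encard = ((v⁻¹ * ·) '' V).encard := ((mul_right_injective _).injOn.encard_image).symm
    _ ≤ U.encard := Set.encard_le_encard (by rintro _ ⟨w, hw, rfl⟩; exact h v hv w hw)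

theorem IsIsometricAction.dist_smul_inv_mul {G S : Type*} [Group G] [MetricSpace S]
    [MulAction G S] (hiso : IsIsometricAction G S) (g h : G) (x : S) :
    dist x ((g⁻¹ * h) • x) = dist (g • x) (h • x) := by
  rw [← hiso g, mul_smul, smul_inv_smul]

def coarseStabilizer (G : Type*) {S : Type*} [Group G] [MetricSpace S] [MulAction G S] (ε : ℝ)
    (x y : S) : Set G :=
  {g : G | dist x (g • x) ≤ ε ∧ dist y (g • y) ≤ ε}

section PullBack

variable {G T : Type*} [Group G] {K : Subgroup G} [K.Normal] [MetricSpace T] [MulAction G T]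
  [MulAction (G ⧸ K) T] [IsScalarTower G (G ⧸ K) T]

theorem IsIsometricAction.of_quotient (h : IsIsometricAction (G ⧸ K) T) :
    IsIsometricAction G T := fun g x y => by
  simpa only [MulAction.coe_quotient_smul] using h g x y

theorem UnboundedOrbits.of_quotient (h : UnboundedOrbits (G ⧸ K) T) : UnboundedOrbits G T := by
  obtain ⟨t, ht⟩ := h
  refine ⟨t, ?_⟩
  rw [← QuotientGroup.mk_surjective.range_comp] at ht
  simpa only [Function.comp_def, MulAction.coe_quotient_smul] using ht

theorem coarseStabilizer_eq_preimage (ε : ℝ) (x y : T) :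
    coarseStabilizer G ε x y = (QuotientGroup.mk ⁻¹' coarseStabilizer (G ⧸ K) ε x y) := by
  ext g
  simp [coarseStabilizer, MulAction.coe_quotient_smul]

theorem AcylindricalAction.of_quotient [Finite K] (h : AcylindricalAction (G ⧸ K) T) :
    AcylindricalAction G T := by
  intro ε hε
  obtain ⟨R, N, hR, hN, hbound⟩ := h ε hε
  refine ⟨R, Nat.card K * N, hR, Nat.mul_pos Nat.card_pos hN, fun x y hxy => ?_⟩
  calc (coarseStabilizer G ε x y).encard
      ≤ Nat.card K * (coarseStabilizer (G ⧸ K) ε x y).encard := by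
        rw [coarseStabilizer_eq_preimage (K := K)]
        exact QuotientGroup.encard_preimage_mk_le K _
    _ ≤ Nat.card K * N := by gcongr; exact hbound x y hxy
    _ = (Nat.card K * N : ℕ) := by push_cast; rfl

end PullBack

section Geodesics

variable {X Y : Type*} [MetricSpace X] [MetricSpace Y] {γ : ℝ → X} {a b : X} {t : ℝ}

namespace IsGeodesicParam

theorem dist_left (hγ : IsGeodesicParam γ a b) (ht : t ∈ Set.Icc 0 (dist a b)) :
    dist a (γ t) = t := by
  rw [← hγ.1, hγ.2.2 0 (Set.left_mem_Icc.2 dist_nonneg) t ht, zero_sub, abs_neg,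
    abs_of_nonneg ht.1]

theorem dist_right (hγ : IsGeodesicParam γ a b) (ht : t ∈ Set.Icc 0 (dist a b)) :
    dist (γ t) b = dist a b - t := by
  conv_lhs => rw [← hγ.2.1]
  rw [hγ.2.2 t ht _ (Set.right_mem_Icc.2 dist_nonneg), abs_of_nonpos (by linarith [ht.2])]
  ring

theorem continuousOn (hγ : IsGeodesicParam γ a b) : ContinuousOn γ (Set.Icc 0 (dist a b)) :=
  (LipschitzOnWith.of_dist_le_mul (K := 1) fun s hs t ht => by
    rw [hγ.2.2 s hs t ht, NNReal.coe_one, one_mul, Real.dist_eq]).continuousOn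

theorem isCompact_geodSide (hγ : IsGeodesicParam γ a b) : IsCompact (geodSide γ a b) :=
  isCompact_Icc.image_of_continuousOn hγ.continuousOn

theorem left_mem_geodSide (hγ : IsGeodesicParam γ a b) : a ∈ geodSide γ a b :=
  ⟨0, Set.left_mem_Icc.2 dist_nonneg, hγ.1⟩

theorem dist_right_le (hγ : IsGeodesicParam γ a b) (ht : t ∈ Set.Icc 0 (dist a b)) (p : X) :
    dist p b ≤ dist a b - dist a p + 2 * dist p (γ t) := by
  have h₁ := dist_triangle p (γ t) b
  have h₂ := dist_triangle a (γ t) p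
  rw [hγ.dist_right ht] at h₁
  rw [hγ.dist_left ht, dist_comm (γ t)] at h₂
  linarith

theorem map {f : X → Y} (hf : ∀ x y, dist (f x) (f y) ≤ dist x y) (hγ : IsGeodesicParam γ a b)
    (hab : dist (f a) (f b) = dist a b) : IsGeodesicParam (f ∘ γ) (f a) (f b) := by
  have key : ∀ s ∈ Set.Icc 0 (dist a b), ∀ t ∈ Set.Icc 0 (dist a b), s ≤ t →
      dist (f (γ s)) (f (γ t)) = t - s := by
    intro s hs t ht hst
    have hle := hf (γ s) (γ t)
    rw [hγ.2.2 s hs t ht, abs_of_nonpos (by linarith)] at hle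
    have h₁ := hf a (γ s)
    have h₂ := hf (γ t) b
    have h₃ := dist_triangle4 (f a) (f (γ s)) (f (γ t)) (f b)
    rw [hγ.dist_left hs] at h₁
    rw [hγ.dist_right ht] at h₂
    linarith
  refine ⟨congrArg f hγ.1, by rw [hab, Function.comp_apply, hγ.2.1], ?_⟩
  rw [hab]
  intro s hs t ht
  rcases le_total s t with hst | hst
  · rw [Function.comp_apply, Function.comp_apply, key s hs t ht hst, abs_of_nonpos (by linarith)]
    ring
  · rw [Function.comp_apply, Function.comp_apply, dist_comm, key t ht s hs hst,
      abs_of_nonneg (by linarith)]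

end IsGeodesicParam

end Geodesics

theorem SideThin.symm {X : Type*} [MetricSpace X] {δ : ℝ} {A B C : Set X}
    (h : SideThin δ A B C) : SideThin δ A C B := fun p hp => by
  obtain ⟨q, hq, hpq⟩ := h p hp
  exact ⟨q, Set.union_comm B C ▸ hq, hpq⟩

def ThinTriangles (X : Type*) [MetricSpace X] (δ : ℝ) : Prop :=
  ∀ (x y z : X) (γ₁ γ₂ γ₃ : ℝ → X),
    IsGeodesicParam γ₁ x y → IsGeodesicParam γ₂ y z → IsGeodesicParam γ₃ x z →
      SideThin δ (geodSide γ₁ x y) (geodSide γ₂ y z) (geodSide γ₃ x z) ∧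
      SideThin δ (geodSide γ₂ y z) (geodSide γ₁ x y) (geodSide γ₃ x z) ∧
      SideThin δ (geodSide γ₃ x z) (geodSide γ₁ x y) (geodSide γ₂ y z)

section GromovProduct

variable {X : Type*} [MetricSpace X] {γ : ℝ → X} {a b c w : X} {t e : ℝ}

noncomputable def gromovProduct (w a b : X) : ℝ := (dist w a + dist w b - dist a b) / 2

theorem gromovProduct_comm (w a b : X) : gromovProduct w a b = gromovProduct w b a := by
  rw [gromovProduct, gromovProduct, dist_comm a b, add_comm (dist w a)]

theorem gromovProduct_nonneg (w a b : X) : 0 ≤ gromovProduct w a b := by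
  have := dist_triangle_left a b w
  simp only [gromovProduct]
  linarith

theorem gromovProduct_le_dist (w a b : X) : gromovProduct w a b ≤ dist w a := by
  have := dist_triangle w a b
  simp only [gromovProduct]
  linarith

theorem gromovProduct_eq_of_base (c w a b : X) :
    gromovProduct w a b =
      dist w c + gromovProduct c a b - gromovProduct c a w - gromovProduct c b w := by
  simp only [gromovProduct]
  rw [dist_comm w a, dist_comm w b, dist_comm w c]
  ring

theorem IsGeodesicParam.gromovProduct_le_dist (hγ : IsGeodesicParam γ a b)
    (ht : t ∈ Set.Icc 0 (dist a b)) (w : X) : gromovProduct w a b ≤ dist w (γ t) := by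
  have h₁ := dist_triangle w (γ t) a
  have h₂ := dist_triangle w (γ t) b
  rw [dist_comm (γ t), hγ.dist_left ht] at h₁
  rw [hγ.dist_right ht] at h₂
  simp only [gromovProduct]
  linarith

theorem IsGeodesicParam.gromovProduct_eq_zero (hγ : IsGeodesicParam γ a b)
    (ht : t ∈ Set.Icc 0 (dist a b)) : gromovProduct (γ t) a b = 0 := by
  simp only [gromovProduct, dist_comm (γ t) a, hγ.dist_left ht, hγ.dist_right ht]
  ring

def FourPointConditionAt (w : X) (e : ℝ) : Prop :=
  ∀ x y z : X, min (gromovProduct w x z) (gromovProduct w z y) ≤ gromovProduct w x y + e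

variable (X) in
def FourPointCondition (e : ℝ) : Prop := ∀ w : X, FourPointConditionAt w e

theorem FourPointConditionAt.nonneg (h : FourPointConditionAt w e) : 0 ≤ e := by
  simpa [gromovProduct] using h w w w

theorem FourPointConditionAt.fourPointCondition (h : FourPointConditionAt c e) :
    FourPointCondition X (2 * e) := by
  intro w x y z
  have h₁ := h x y z
  have h₂ := h x y w
  have h₃ := h z w x
  have h₄ := h z w y
  rw [gromovProduct_eq_of_base c w x z, gromovProduct_eq_of_base c w z y,
    gromovProduct_eq_of_base c w x y]
  rw [gromovProduct_comm c z y] at h₁ ⊢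
  rw [gromovProduct_comm c w y] at h₂
  rw [gromovProduct_comm c z x] at h₃
  rw [gromovProduct_comm c z y] at h₄
  -- Based at `c`, the goal is `min ((x|z) + (y|w)) ((y|z) + (x|w)) ≤ (x|y) + (z|w) + 2e`;
  -- each of the sixteen cases of `h₁`, ..., `h₄` refutes its negation linearly.
  by_contra! hlt
  rw [lt_min_iff] at hlt
  rcases min_le_iff.1 h₁ with h₁ | h₁ <;> rcases min_le_iff.1 h₂ with h₂ | h₂ <;>
    rcases min_le_iff.1 h₃ with h₃ | h₃ <;> rcases min_le_iff.1 h₄ with h₄ | h₄ <;>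
    linarith

theorem FourPointCondition.exists_mem_geodSide_dist_le (h : FourPointCondition X e)
    (hγ : IsGeodesicParam γ a b) (p : X) :
    ∃ q ∈ geodSide γ a b, dist p q ≤ gromovProduct p a b + 2 * e := by
  set t := gromovProduct a b p
  have ht : t ∈ Set.Icc 0 (dist a b) := ⟨gromovProduct_nonneg a b p, gromovProduct_le_dist a b p⟩
  refine ⟨γ t, ⟨t, ht, rfl⟩, ?_⟩
  have hbt : gromovProduct a b (γ t) = t := by
    simp only [gromovProduct, hγ.dist_left ht, dist_comm b, hγ.dist_right ht]
    ring
  have h₄ := h a p (γ t) b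
  rw [gromovProduct_comm a p b, hbt, min_self] at h₄
  have ht_eq : t = (dist a b + dist a p - dist p b) / 2 := by
    simp only [t, gromovProduct, dist_comm b p]
  simp only [gromovProduct, hγ.dist_left ht, dist_comm p a, dist_comm b p] at h₄ ⊢
  linarith

theorem FourPointCondition.sideThin {u v : X} {B C : Set X} (h : FourPointCondition X e)
    (hγ : IsGeodesicParam γ u v)
    (hB : ∀ p, ∃ q ∈ B, dist p q ≤ gromovProduct p u w + 2 * e)
    (hC : ∀ p, ∃ q ∈ C, dist p q ≤ gromovProduct p w v + 2 * e) :
    SideThin (3 * e) (geodSide γ u v) B C := by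
  rintro _ ⟨t, ht, rfl⟩
  have h₄ := h (γ t) u v w
  rw [hγ.gromovProduct_eq_zero ht, zero_add] at h₄
  rcases min_le_iff.1 h₄ with hw | hw
  · obtain ⟨q, hq, hpq⟩ := hB (γ t)
    exact ⟨q, Or.inl hq, by linarith⟩
  · obtain ⟨q, hq, hpq⟩ := hC (γ t)
    exact ⟨q, Or.inr hq, by linarith⟩

theorem FourPointCondition.thinTriangles (h : FourPointCondition X e) :
    ThinTriangles X (3 * e) := by
  have near {γ : ℝ → X} {a b : X} (hγ : IsGeodesicParam γ a b) (p : X) :=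
    h.exists_mem_geodSide_dist_le hγ p
  have near' {γ : ℝ → X} {a b : X} (hγ : IsGeodesicParam γ a b) (p : X) :
      ∃ q ∈ geodSide γ a b, dist p q ≤ gromovProduct p b a + 2 * e := by
    rw [gromovProduct_comm]; exact near hγ p
  intro x y z γ₁ γ₂ γ₃ h₁ h₂ h₃
  exact ⟨(h.sideThin h₁ (near h₃) (near' h₂)).symm, h.sideThin h₂ (near' h₁) (near h₃),
    h.sideThin h₃ (near h₁) (near h₂)⟩

end GromovProduct

section ThinTriangles

variable {X : Type*} [MetricSpace X] {δ : ℝ} {γ₁ γ₂ γ₃ : ℝ → X} {x y w : X}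

open Metric

theorem ThinTriangles.exists_infDist_le (hthin : ThinTriangles X δ) (h₁ : IsGeodesicParam γ₁ x y)
    (h₂ : IsGeodesicParam γ₂ y w) (h₃ : IsGeodesicParam γ₃ x w) :
    ∃ s ∈ Set.Icc 0 (dist x y),
      infDist (γ₁ s) (geodSide γ₂ y w) ≤ δ ∧ infDist (γ₁ s) (geodSide γ₃ x w) ≤ δ := by
  set f : ℝ → ℝ := fun s => infDist (γ₁ s) (geodSide γ₃ x w) - infDist (γ₁ s) (geodSide γ₂ y w)
  have hf : ContinuousOn f (Set.Icc 0 (dist x y)) :=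
    ((continuous_infDist_pt _).comp_continuousOn h₁.continuousOn).sub
      ((continuous_infDist_pt _).comp_continuousOn h₁.continuousOn)
  have hf₀ : f 0 ≤ 0 := by
    simp only [f, h₁.1, infDist_zero_of_mem h₃.left_mem_geodSide, zero_sub, neg_nonpos]
    exact infDist_nonneg
  have hf₁ : 0 ≤ f (dist x y) := by
    simp only [f, h₁.2.1, infDist_zero_of_mem h₂.left_mem_geodSide, sub_zero]
    exact infDist_nonneg
  obtain ⟨s, hs, hfs⟩ := intermediate_value_Icc dist_nonneg hf ⟨hf₀, hf₁⟩
  have heq : infDist (γ₁ s) (geodSide γ₃ x w) = infDist (γ₁ s) (geodSide γ₂ y w) :=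
    sub_eq_zero.1 hfs
  obtain ⟨q, hq | hq, hpq⟩ := (hthin x y w γ₁ γ₂ γ₃ h₁ h₂ h₃).1 (γ₁ s) ⟨s, hs, rfl⟩
  · have := (infDist_le_dist_of_mem hq).trans hpq
    exact ⟨s, hs, this, heq ▸ this⟩
  · have := (infDist_le_dist_of_mem hq).trans hpq
    exact ⟨s, hs, heq ▸ this, this⟩

theorem ThinTriangles.exists_dist_le_gromovProduct (hgeo : GeodesicSpace X)
    (hthin : ThinTriangles X δ) (h₁ : IsGeodesicParam γ₁ x y) (w : X) :
    ∃ s ∈ Set.Icc 0 (dist x y), dist (γ₁ s) w ≤ gromovProduct w x y + 2 * δ := by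
  obtain ⟨γ₂, h₂⟩ := hgeo y w
  obtain ⟨γ₃, h₃⟩ := hgeo x w
  obtain ⟨s, hs, hd₂, hd₃⟩ := hthin.exists_infDist_le h₁ h₂ h₃
  obtain ⟨_, ⟨u₂, hu₂, rfl⟩, hq₂⟩ :=
    h₂.isCompact_geodSide.exists_infDist_eq_dist ⟨y, h₂.left_mem_geodSide⟩ (γ₁ s)
  obtain ⟨_, ⟨u₃, hu₃, rfl⟩, hq₃⟩ :=
    h₃.isCompact_geodSide.exists_infDist_eq_dist ⟨x, h₃.left_mem_geodSide⟩ (γ₁ s)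
  have e₂ := h₂.dist_right_le hu₂ (γ₁ s)
  have e₃ := h₃.dist_right_le hu₃ (γ₁ s)
  rw [dist_comm y (γ₁ s), h₁.dist_right hs] at e₂
  rw [h₁.dist_left hs] at e₃
  refine ⟨s, hs, ?_⟩
  simp only [gromovProduct, dist_comm w]
  linarith

theorem ThinTriangles.fourPointCondition (hgeo : GeodesicSpace X) (hthin : ThinTriangles X δ) :
    FourPointCondition X (3 * δ) := by
  intro w x y z
  obtain ⟨γ₁, h₁⟩ := hgeo x y
  obtain ⟨γ₂, h₂⟩ := hgeo y z
  obtain ⟨γ₃, h₃⟩ := hgeo x z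
  obtain ⟨s, hs, hws⟩ := hthin.exists_dist_le_gromovProduct hgeo h₁ w
  obtain ⟨_, ⟨u, hu, rfl⟩ | ⟨u, hu, rfl⟩, hsq⟩ :=
    (hthin x y z γ₁ γ₂ γ₃ h₁ h₂ h₃).1 (γ₁ s) ⟨s, hs, rfl⟩
  · have := h₂.gromovProduct_le_dist hu w
    have := dist_triangle_left w (γ₂ u) (γ₁ s)
    rw [gromovProduct_comm w z y]
    exact (min_le_right _ _).trans (by linarith)
  · have := h₃.gromovProduct_le_dist hu w
    have := dist_triangle_left w (γ₃ u) (γ₁ s)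
    exact (min_le_left _ _).trans (by linarith)

end ThinTriangles

theorem HyperbolicSpace.exists_fourPointCondition {X : Type*} [MetricSpace X]
    (h : HyperbolicSpace X) : ∃ e, FourPointCondition X e :=
  let ⟨hgeo, _, _, hthin⟩ := h
  ⟨_, ThinTriangles.fourPointCondition hgeo hthin⟩

theorem hyperbolicSpace_of_fourPointConditionAt {X : Type*} [MetricSpace X]
    (hgeo : GeodesicSpace X) (h : ∀ w : X, ∃ e, FourPointConditionAt w e) : HyperbolicSpace X := by
  rcases isEmpty_or_nonempty X with _ | ⟨⟨c⟩⟩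
  · exact ⟨hgeo, 0, le_rfl, fun x => isEmptyElim x⟩
  · obtain ⟨e, hc⟩ := h c
    exact ⟨hgeo, 3 * (2 * e), by linarith [hc.nonneg], hc.fourPointCondition.thinTriangles⟩

theorem FourPointConditionAt.of_lift {X Y : Type*} [MetricSpace X] [MetricSpace Y] {π : X → Y}
    (hπ : Function.Surjective π) (hle : ∀ x y, dist (π x) (π y) ≤ dist x y)
    (hlift : ∀ x y, ∃ x', π x' = y ∧ dist (π x) y = dist x x')
    {c : X} {D e : ℝ} (hc : ∀ v, dist c v - D ≤ dist (π c) (π v))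
    (h : FourPointConditionAt c e) : FourPointConditionAt (π c) (e + D) := by
  intro x y z
  obtain ⟨a, rfl⟩ := hπ x
  obtain ⟨d, rfl, had⟩ := hlift a z
  obtain ⟨b, rfl, hdb⟩ := hlift d y
  have h₁ : gromovProduct (π c) (π a) (π d) ≤ gromovProduct c a d := by
    simp only [gromovProduct, had]
    linarith [hle c a, hle c d]
  have h₂ : gromovProduct (π c) (π d) (π b) ≤ gromovProduct c d b := by
    simp only [gromovProduct, hdb]
    linarith [hle c d, hle c b]
  have h₃ : gromovProduct c a b - D ≤ gromovProduct (π c) (π a) (π b) := by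
    simp only [gromovProduct]
    linarith [hle a b, hc a, hc b]
  calc min _ _ ≤ min (gromovProduct c a d) (gromovProduct c d b) := min_le_min h₁ h₂
    _ ≤ gromovProduct c a b + e := h a b d
    _ ≤ _ := by linarith

/-- The space of `K`-orbits. For finite `K` it is metrized by the Hausdorff distance between
orbits, which for an isometric action is `d(K a, K b) = min_{k ∈ K} d(a, k b)`. -/
def OrbitSpace {G : Type*} [Group G] (K : Subgroup G) (S : Type*) [MulAction G S] : Type _ :=
  MulAction.orbitRel.Quotient K S

namespace OrbitSpace

open Metric MulAction

variable {G S : Type*} [Group G] [MulAction G S] (K : Subgroup G)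

def mk (a : S) : OrbitSpace K S := Quotient.mk _ a

theorem mk_surjective : Function.Surjective (mk K : S → OrbitSpace K S) :=
  Quotient.mk_surjective

theorem mk_smul_of_mem {k : G} (hk : k ∈ K) (a : S) : mk K (k • a) = mk K a :=
  Quotient.sound ⟨⟨k, hk⟩, rfl⟩

instance [K.Normal] : MulAction (G ⧸ K) (OrbitSpace K S) where
  smul q x := Quotient.liftOn₂ q x (fun g a => mk K (g • a)) fun g₁ a₁ g₂ a₂ hg ⟨k, hk⟩ => by
    have hg' : g₁⁻¹ * g₂ ∈ K := QuotientGroup.leftRel_apply.1 hg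
    refine Quotient.sound ⟨⟨g₁ * (k * (g₁⁻¹ * g₂)⁻¹) * g₁⁻¹,
      ‹K.Normal›.conj_mem _ (K.mul_mem k.2 (K.inv_mem hg')) g₁⟩, ?_⟩
    simp only [subgroup_smul_def, ← hk, smul_smul]
    group
  one_smul x := Quotient.inductionOn x fun a => congrArg (mk K) (one_smul G a)
  mul_smul p q x := Quotient.inductionOn₃ p q x fun g h a => congrArg (mk K) (mul_smul g h a)

theorem coe_smul_mk [K.Normal] (g : G) (a : S) : (g : G ⧸ K) • mk K a = mk K (g • a) := rfl

theorem finite_orbit [Finite K] (a : S) : (orbit K a).Finite := Finite.finite_mulAction_orbit a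

variable [MetricSpace S] [Finite K]

noncomputable def toNonemptyCompacts (x : OrbitSpace K S) :
    TopologicalSpace.NonemptyCompacts S :=
  ⟨⟨orbitRel.Quotient.orbit x, by
    obtain ⟨a, rfl⟩ := mk_surjective K x
    exact (finite_orbit K a).isCompact⟩, orbitRel.Quotient.nonempty_orbit x⟩

noncomputable instance : MetricSpace (OrbitSpace K S) :=
  MetricSpace.induced (toNonemptyCompacts K)
    (fun _ _ h => orbitRel.Quotient.orbit_injective
      (congrArg (fun A : TopologicalSpace.NonemptyCompacts S => (A : Set S)) h))
    inferInstance

theorem dist_mk (a b : S) :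
    dist (mk K a) (mk K b) = hausdorffDist (orbit K a) (orbit K b) := rfl

variable (hiso : IsIsometricAction G S)
include hiso

theorem dist_mk_le {k : G} (hk : k ∈ K) (a b : S) : dist (mk K a) (mk K b) ≤ dist a (k • b) := by
  rw [dist_mk]
  refine hausdorffDist_le_of_mem_dist dist_nonneg ?_ ?_
  · rintro _ ⟨j, rfl⟩
    refine ⟨(j * ⟨k, hk⟩) • b, mem_orbit _ _, le_of_eq ?_⟩
    simp only [mul_smul, subgroup_smul_def]
    exact hiso _ _ _
  · rintro _ ⟨j, rfl⟩
    refine ⟨(j * ⟨k, hk⟩⁻¹) • a, mem_orbit _ _, le_of_eq ?_⟩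
    simp only [mul_smul, subgroup_smul_def, Subgroup.coe_inv]
    rw [hiso, dist_comm, ← hiso k, smul_inv_smul]

theorem dist_mk_mk_le (a b : S) : dist (mk K a) (mk K b) ≤ dist a b := by
  simpa using dist_mk_le K hiso K.one_mem a b

theorem exists_dist_mk_eq (a b : S) : ∃ k ∈ K, dist (mk K a) (mk K b) = dist a (k • b) := by
  obtain ⟨_, ⟨k, rfl⟩, hk⟩ :=
    (finite_orbit K b).isCompact.exists_infDist_eq_dist (nonempty_orbit b) a
  refine ⟨k, k.2, le_antisymm (dist_mk_le K hiso k.2 a b) ?_⟩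
  rw [← subgroup_smul_def, ← hk, dist_mk]
  exact infDist_le_hausdorffDist_of_mem (mem_orbit_self a)
    (hausdorffEDist_ne_top_of_nonempty_of_bounded (nonempty_orbit a) (nonempty_orbit b)
      (finite_orbit K a).isBounded (finite_orbit K b).isBounded)

theorem exists_mk_eq_dist_eq (a : S) (y : OrbitSpace K S) :
    ∃ b, mk K b = y ∧ dist (mk K a) y = dist a b := by
  obtain ⟨b, rfl⟩ := mk_surjective K y
  obtain ⟨k, hk, hab⟩ := exists_dist_mk_eq K hiso a b
  exact ⟨k • b, mk_smul_of_mem K hk b, hab⟩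

theorem dist_sub_diam_le (c v : S) : dist c v - diam (orbit K c) ≤ dist (mk K c) (mk K v) := by
  obtain ⟨k, hk, hcv⟩ := exists_dist_mk_eq K hiso c v
  have h₁ := dist_triangle c (k⁻¹ • c) v
  have h₂ : dist c (k⁻¹ • c) ≤ diam (orbit K c) :=
    dist_le_diam_of_mem (finite_orbit K c).isBounded (mem_orbit_self c)
      (mem_orbit c (⟨k, hk⟩⁻¹ : K))
  have h₃ : dist (k⁻¹ • c) v = dist c (k • v) := by rw [← hiso k, smul_inv_smul]
  linarith

theorem geodesicSpace (hgeo : GeodesicSpace S) : GeodesicSpace (OrbitSpace K S) := by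
  intro x y
  obtain ⟨a, rfl⟩ := mk_surjective K x
  obtain ⟨b, rfl, hab⟩ := exists_mk_eq_dist_eq K hiso a y
  obtain ⟨γ, hγ⟩ := hgeo a b
  exact ⟨_, hγ.map (dist_mk_mk_le K hiso) hab⟩

theorem hyperbolicSpace (h : HyperbolicSpace S) : HyperbolicSpace (OrbitSpace K S) := by
  obtain ⟨e, h4⟩ := h.exists_fourPointCondition
  refine hyperbolicSpace_of_fourPointConditionAt (geodesicSpace K hiso h.1) fun x => ?_
  obtain ⟨c, rfl⟩ := mk_surjective K x
  exact ⟨_, (h4 c).of_lift (mk_surjective K) (dist_mk_mk_le K hiso) (exists_mk_eq_dist_eq K hiso)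
    (dist_sub_diam_le K hiso c)⟩

variable [K.Normal]

theorem isIsometricAction : IsIsometricAction (G ⧸ K) (OrbitSpace K S) := by
  have key (g : G) (a b : S) : dist (mk K (g • a)) (mk K (g • b)) ≤ dist (mk K a) (mk K b) := by
    obtain ⟨k, hk, hab⟩ := exists_dist_mk_eq K hiso a b
    calc _ ≤ dist (g • a) ((g * k * g⁻¹) • g • b) :=
          dist_mk_le K hiso (‹K.Normal›.conj_mem k hk g) _ _
      _ = dist (mk K a) (mk K b) := by rw [hab, smul_smul, inv_mul_cancel_right, mul_smul, hiso]
  intro q x y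
  obtain ⟨g, rfl⟩ := QuotientGroup.mk_surjective q
  obtain ⟨a, rfl⟩ := mk_surjective K x
  obtain ⟨b, rfl⟩ := mk_surjective K y
  rw [coe_smul_mk, coe_smul_mk]
  refine le_antisymm (key g a b) ?_
  simpa only [inv_smul_smul] using key g⁻¹ (g • a) (g • b)

theorem encard_coarseStabilizer_le (ε : ℝ) (a b : S) :
    (coarseStabilizer (G ⧸ K) ε (mk K a) (mk K b)).encard ≤
      Nat.card K * (coarseStabilizer G (2 * ε) a b).encard := by
  -- Each `q` lifts to some `h` with `d(a, h a) ≤ ε` and `d(b, κ h b) ≤ ε` for some `κ ∈ K`;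
  -- two such lifts with the same `κ` differ by an element of the `2ε`-coarse stabilizer.
  set V : K → Set G := fun κ => {h | dist a (h • a) ≤ ε ∧ dist b ((κ : G) • h • b) ≤ ε}
  have hcover : coarseStabilizer (G ⧸ K) ε (mk K a) (mk K b) ⊆ ⋃ κ, QuotientGroup.mk '' V κ := by
    rintro q ⟨hqa, hqb⟩
    obtain ⟨g, rfl⟩ := QuotientGroup.mk_surjective q
    obtain ⟨k₁, hk₁, e₁⟩ := exists_dist_mk_eq K hiso a (g • a)
    obtain ⟨k₂, hk₂, e₂⟩ := exists_dist_mk_eq K hiso b (g • b)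
    rw [coe_smul_mk, e₁] at hqa
    rw [coe_smul_mk, e₂] at hqb
    refine Set.mem_iUnion.2 ⟨⟨k₂ * k₁⁻¹, K.mul_mem hk₂ (K.inv_mem hk₁)⟩, k₁ * g, ⟨?_, ?_⟩, ?_⟩
    · rwa [mul_smul]
    · show dist b ((k₂ * k₁⁻¹) • (k₁ * g) • b) ≤ ε
      rwa [smul_smul, mul_assoc, inv_mul_cancel_left, mul_smul]
    · rw [QuotientGroup.mk_mul, (QuotientGroup.eq_one_iff k₁).2 hk₁, one_mul]
  have hV (κ : K) : ((QuotientGroup.mk : G → G ⧸ K) '' V κ).encard ≤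
      (coarseStabilizer G (2 * ε) a b).encard := by
    refine (Set.encard_image_le _ _).trans (Set.encard_le_of_inv_mul_mem ?_)
    rintro v ⟨hva, hvb⟩ w ⟨hwa, hwb⟩
    constructor
    · rw [hiso.dist_smul_inv_mul]
      linarith [dist_triangle_left (v • a) (w • a) a]
    · rw [hiso.dist_smul_inv_mul, ← hiso κ]
      linarith [dist_triangle_left ((κ : G) • v • b) ((κ : G) • w • b) b]
  exact (Set.encard_le_encard hcover).trans (Set.encard_iUnion_le_card_mul _ hV)

theorem acylindricalAction (h : AcylindricalAction G S) :
    AcylindricalAction (G ⧸ K) (OrbitSpace K S) := by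
  intro ε hε
  obtain ⟨R, N, hR, hN, hbound⟩ := h (2 * ε) (by positivity)
  refine ⟨R, Nat.card K * N, hR, Nat.mul_pos Nat.card_pos hN, fun x y hxy => ?_⟩
  obtain ⟨a, rfl⟩ := mk_surjective K x
  obtain ⟨b, rfl, hab⟩ := exists_mk_eq_dist_eq K hiso a y
  calc (coarseStabilizer (G ⧸ K) ε (mk K a) (mk K b)).encard
      ≤ Nat.card K * (coarseStabilizer G (2 * ε) a b).encard :=
        encard_coarseStabilizer_le K hiso ε a b
    _ ≤ Nat.card K * N := by gcongr; exact hbound a b (hab ▸ hxy)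
    _ = (Nat.card K * N : ℕ) := by push_cast; rfl

theorem unboundedOrbits (h : UnboundedOrbits G S) : UnboundedOrbits (G ⧸ K) (OrbitSpace K S) := by
  obtain ⟨s, hs⟩ := h
  refine ⟨mk K s, fun hb => hs ?_⟩
  obtain ⟨C, hC⟩ := (isBounded_iff_subset_closedBall (mk K s)).1 hb
  refine (isBounded_iff_subset_closedBall s).2 ⟨C + diam (orbit K s), ?_⟩
  rintro _ ⟨g, rfl⟩
  have h₁ : dist (mk K (g • s)) (mk K s) ≤ C := hC ⟨g, coe_smul_mk K g s⟩
  have h₂ := dist_sub_diam_le K hiso s (g • s)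
  rw [mem_closedBall, dist_comm]
  rw [dist_comm] at h₁
  linarith

end OrbitSpace

/-- Let `K` be a finite normal subgroup of `G`. Then `G` is acylindrically hyperbolic
if and only if `G ⧸ K` is acylindrically hyperbolic. -/
theorem statement_10 {G : Type*} [Group G] (K : Subgroup G) [K.Normal]
    (hfin : (K : Set G).Finite) :
    AcylindricallyHyperbolic G ↔ AcylindricallyHyperbolic (G ⧸ K) := by
  have : Finite K := hfin.to_subtype
  constructor
  · rintro ⟨hvc, S, _, _, hiso, hhyp, hacyl, hunb⟩
    exact ⟨fun h => hvc h.of_quotient, OrbitSpace K S, inferInstance, inferInstance,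
      OrbitSpace.isIsometricAction K hiso, OrbitSpace.hyperbolicSpace K hiso hhyp,
      OrbitSpace.acylindricalAction K hiso hacyl, OrbitSpace.unboundedOrbits K hiso hunb⟩
  · rintro ⟨hvc, T, _, _, hiso, hhyp, hacyl, hunb⟩
    let := MulAction.compHom T (QuotientGroup.mk' K)
    have : IsScalarTower G (G ⧸ K) T := ⟨fun g q t => mul_smul (g : G ⧸ K) q t⟩
    exact ⟨fun h => hvc (h.of_surjective (QuotientGroup.mk'_surjective K)), T, inferInstance,
      inferInstance, hiso.of_quotient, hhyp, hacyl.of_quotient, hunb.of_quotient⟩
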